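/- If G is a finite claw-free CIS graph, then |V(G)| ≤ α(G) · ω(G), where α(G) is the stability number and ω(G) is the clique number of G. -/

import Mathlib

open SimpleGraph

namespace SimpleGraph

/-- A matching in `G`, viewed as a set of pairwise disjoint edges of `G`. -/
def IsMatchingSet {V : Type*} (G : SimpleGraph V) (M : Set (Sym2 V)) : Prop :=
  M ⊆ G.edgeSet ∧ ∀ e ∈ M, ∀ f ∈ M, e ≠ f → ∀ v : V, ¬(v ∈ e ∧ v ∈ f)

/-- A matching (set of edges) `M` saturates a vertex `v` if some edge of `M` contains `v`. -/
def SaturatedBy {V : Type*} (M : Set (Sym2 V)) (v : V) : Prop := ∃ e ∈ M, v ∈ e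

/-- A perfect internal matching: a matching of `G` saturating every vertex of degree ≥ 2. -/
def IsPerfectInternalMatching {V : Type*} (G : SimpleGraph V) (M : Set (Sym2 V)) : Prop :=
  G.IsMatchingSet M ∧ ∀ v : V, 2 ≤ (G.neighborSet v).ncard → SaturatedBy M v

/-- A graph is randomly internally matchable if every maximal matching is a
perfect internal matching. -/
def RandomlyInternallyMatchable {V : Type*} (G : SimpleGraph V) : Prop :=
  ∀ M : Set (Sym2 V), Maximal G.IsMatchingSet M → G.IsPerfectInternalMatching M

/-- A stable (independent) set: pairwise non-adjacent vertices. -/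
def IsStableSet {V : Type*} (G : SimpleGraph V) (S : Set V) : Prop :=
  S.Pairwise fun u v => ¬ G.Adj u v

/-- A CIS graph: every maximal clique intersects every maximal stable set. -/
def IsCIS {V : Type*} (G : SimpleGraph V) : Prop :=
  ∀ C S : Set V, Maximal G.IsClique C → Maximal G.IsStableSet S → (C ∩ S).Nonempty

/-- `G` is `H`-free: no induced subgraph of `G` is isomorphic to `H`. -/
def InducedFree {V W : Type*} (G : SimpleGraph V) (H : SimpleGraph W) : Prop :=
  ∀ s : Set V, ¬ Nonempty (H ≃g (G.induce s))

/-- `G` is a leaf extension with core set `S`: every vertex outside `S` has degree exactly one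
with its unique neighbor in `S`, and every vertex of `S` has a neighbor outside `S`. -/
def IsLeafExtension {V : Type*} (G : SimpleGraph V) (S : Set V) : Prop :=
  (∀ v ∉ S, (G.neighborSet v).ncard = 1 ∧ ∀ u : V, G.Adj v u → u ∈ S) ∧
  ∀ s ∈ S, ∃ v ∉ S, G.Adj s v

/-- No two distinct vertices have equal closed neighborhoods. -/
def TrueTwinFree {V : Type*} (G : SimpleGraph V) : Prop :=
  ∀ x y : V, (∀ z : V, (G.Adj x z ∨ x = z) ↔ (G.Adj y z ∨ y = z)) → x = y

/-- The corona `G ∘ K₁`: for each vertex `v` of `G` add a new pendant vertex adjacent to `v`. -/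
def corona {V : Type*} (G : SimpleGraph V) : SimpleGraph (V ⊕ V) :=
  SimpleGraph.fromRel fun a b =>
    match a, b with
    | Sum.inl u, Sum.inl v => G.Adj u v
    | Sum.inl u, Sum.inr v => u = v
    | _, _ => False

/-- The graph obtained from `H` by gluing a new triangle vertex along each edge of `H`. -/
def glueTriangles {V : Type*} (H : SimpleGraph V) : SimpleGraph (V ⊕ H.edgeSet) :=
  SimpleGraph.fromRel fun a b =>
    match a, b with
    | Sum.inl u, Sum.inl v => H.Adj u v
    | Sum.inl u, Sum.inr e => u ∈ (e : Sym2 V)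
    | _, _ => False

/-- The clique number: maximum size of a clique. -/
noncomputable def cliqueNumber {V : Type*} (G : SimpleGraph V) : ℕ :=
  sSup {n | ∃ C : Set V, G.IsClique C ∧ C.ncard = n}

/-- The stability (independence) number: maximum size of a stable set. -/
noncomputable def stabilityNumber {V : Type*} (G : SimpleGraph V) : ℕ :=
  sSup {n | ∃ S : Set V, G.IsStableSet S ∧ S.ncard = n}

/-- The matching number: maximum size of a matching. -/
noncomputable def matchingNumber {V : Type*} (G : SimpleGraph V) : ℕ :=
  sSup {n | ∃ M : Set (Sym2 V), G.IsMatchingSet M ∧ M.ncard = n}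

end SimpleGraph

/-- The claw `K_{1,3}`. -/
def clawGraph : SimpleGraph (Fin 1 ⊕ Fin 3) := completeBipartiteGraph (Fin 1) (Fin 3)

/-- The gem: the path `0-1-2-3` together with the universal vertex `4`. -/
def gemGraph : SimpleGraph (Fin 5) :=
  SimpleGraph.fromRel fun a b =>
    b = 4 ∨ (a = 0 ∧ b = 1) ∨ (a = 1 ∧ b = 2) ∨ (a = 2 ∧ b = 3)

/-- The 4-wheel `W₄`: the cycle `0-1-2-3-0` together with the universal vertex `4`. -/
def wheel4Graph : SimpleGraph (Fin 5) :=
  SimpleGraph.fromRel fun a b =>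
    b = 4 ∨ (a = 0 ∧ b = 1) ∨ (a = 1 ∧ b = 2) ∨ (a = 2 ∧ b = 3) ∨ (a = 3 ∧ b = 0)

/-- The disjoint union of `p` copies of `K₂` and `q` copies of `K₁`. -/
def pK2qK1 (p q : ℕ) : SimpleGraph ((Fin p × Fin 2) ⊕ Fin q) :=
  SimpleGraph.fromRel fun a b => ∃ i : Fin p, a = Sum.inl (i, 0) ∧ b = Sum.inl (i, 1)

/-!
Fix a maximum stable set `S` and let each `s ∈ S` send weight `2` to every vertex `v` with
`N[s] ⊆ N[v]` and weight `1` to its remaining neighbours. In a claw-free CIS graph, if `F` is a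
maximal clique through `s`, then `N(s) \ F` is a clique (two non-adjacent vertices of it extend to a
maximal stable set, whose vertex in `F` would complete a claw at `s`). Hence `N[s]` is covered by
two maximal cliques through `s`, and the vertices `v` with `N[s] ⊆ N[v]` lie in both, so `s` sends
at most `2ω`. Every vertex receives at least `2`: a vertex of `S` from itself, a vertex with two
neighbours in `S` from those, and a vertex `v` whose only neighbour in `S` is `s` satisfies
`N[s] ⊆ N[v]`, since otherwise `S - s + v` would be a maximum stable set missing a maximal clique
through `s` and a neighbour of `s` not adjacent to `v`. Thus `2|V| ≤ 2αω`.
-/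

section Finite

variable {α : Type*} [Finite α]

lemma bddAbove_setOf_ncard_eq (P : Set α → Prop) : BddAbove {n | ∃ T, P T ∧ T.ncard = n} :=
  ⟨Nat.card α, by rintro n ⟨T, -, rfl⟩; exact T.ncard_le_card⟩

lemma maximal_of_forall_ncard_le {P : Set α → Prop} {S : Set α} (hS : P S)
    (hmax : ∀ T, P T → T.ncard ≤ S.ncard) : Maximal P S :=
  ⟨hS, fun T hT hST => (Set.eq_of_subset_of_ncard_le hST (hmax T hT)).ge⟩

end Finite

namespace SimpleGraph

variable {V W : Type*} {G : SimpleGraph V}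

lemma inducedFree_iff_not_isIndContained {H : SimpleGraph W} : G.InducedFree H ↔ ¬ H ⊴ G := by
  simp [InducedFree, isIndContained_iff_exists_iso_induce]

lemma InducedFree.adj_of_claw (h : G.InducedFree clawGraph) {s a b c : V}
    (ha : G.Adj s a) (hb : G.Adj s b) (hc : G.Adj s c) (hab : a ≠ b) (hac : a ≠ c) (hbc : b ≠ c)
    (hnab : ¬ G.Adj a b) (hnac : ¬ G.Adj a c) : G.Adj b c := by
  by_contra hnbc
  have hinj : (Sum.elim (fun _ : Fin 1 => s) ![a, b, c]).Injective := by
    rintro (i | i) (j | j) hij <;> fin_cases i <;> fin_cases j <;>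
      simp_all [ha.ne, hb.ne, hc.ne, ha.ne', hb.ne', hc.ne', hab.symm, hac.symm, hbc.symm]
  refine inducedFree_iff_not_isIndContained.1 h <| isIndContained_iff_exists_comap_eq.2
    ⟨⟨_, hinj⟩, ?_⟩
  ext (i | i) (j | j) <;> fin_cases i <;> fin_cases j <;>
    simp_all [clawGraph, G.adj_comm]

def closedNeighborSet (G : SimpleGraph V) (v : V) : Set V := insert v (G.neighborSet v)

@[simp]
lemma mem_closedNeighborSet {u v : V} : u ∈ G.closedNeighborSet v ↔ u = v ∨ G.Adj v u := Iff.rfl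

lemma mem_closedNeighborSet_self (v : V) : v ∈ G.closedNeighborSet v := Or.inl rfl

lemma mem_of_closedNeighborSet_subset {F : Set V} (hF : Maximal G.IsClique F) {s v : V}
    (hs : s ∈ F) (h : G.closedNeighborSet s ⊆ G.closedNeighborSet v) : v ∈ F := by
  refine hF.mem_of_prop_insert (isClique_insert.2 ⟨hF.1, fun u hu hvu => ?_⟩)
  have hus : u ∈ G.closedNeighborSet s := by
    rcases eq_or_ne u s with rfl | hne
    exacts [G.mem_closedNeighborSet_self u, Or.inr (hF.1 hs hu hne.symm)]
  exact (h hus).resolve_left hvu.symm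

lemma isStableSet_insert {S : Set V} {v : V} :
    G.IsStableSet (insert v S) ↔ G.IsStableSet S ∧ ∀ u ∈ S, v ≠ u → ¬ G.Adj v u := by
  simp only [IsStableSet, Set.pairwise_insert, G.adj_comm, and_self]

section Finite

variable [Finite V]

lemma ncard_le_cliqueNumber {C : Set V} (hC : G.IsClique C) : C.ncard ≤ G.cliqueNumber :=
  le_csSup (bddAbove_setOf_ncard_eq _) ⟨C, hC, rfl⟩

lemma ncard_le_stabilityNumber {S : Set V} (hS : G.IsStableSet S) :
    S.ncard ≤ G.stabilityNumber :=
  le_csSup (bddAbove_setOf_ncard_eq _) ⟨S, hS, rfl⟩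

lemma exists_isStableSet_ncard_eq_stabilityNumber :
    ∃ S, G.IsStableSet S ∧ S.ncard = G.stabilityNumber :=
  Nat.sSup_mem (s := {n | ∃ S, G.IsStableSet S ∧ S.ncard = n})
    ⟨0, ∅, Set.pairwise_empty _, Set.ncard_empty V⟩ (bddAbove_setOf_ncard_eq _)

lemma isClique_neighborSet_diff (hclaw : G.InducedFree clawGraph) (hcis : G.IsCIS)
    {F : Set V} (hF : Maximal G.IsClique F) {s : V} (hs : s ∈ F) :
    G.IsClique (G.neighborSet s \ F) := by
  rintro a ⟨hsa, haF⟩ b ⟨hsb, hbF⟩ hab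
  by_contra hnab
  have hstab : G.IsStableSet {a, b} := isStableSet_insert.2
    ⟨Set.pairwise_singleton _ _, by rintro u rfl -; exact hnab⟩
  obtain ⟨U, habU, hU⟩ := Finite.exists_le_maximal hstab
  have haU : a ∈ U := habU (Set.mem_insert a _)
  have hbU : b ∈ U := habU (Set.mem_insert_of_mem a rfl)
  obtain ⟨x, hxF, hxU⟩ := hcis F U hF hU
  have hxs : x ≠ s := by
    rintro rfl
    exact hU.1 hxU haU hsa.ne hsa
  have hxa : x ≠ a := by rintro rfl; exact haF hxF
  have hxb : x ≠ b := by rintro rfl; exact hbF hxF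
  exact hnab <| hclaw.adj_of_claw (hF.1 hs hxF hxs.symm) hsa hsb hxa hxb hab
    (hU.1 hxU haU hxa) (hU.1 hxU hbU hxb)

lemma exists_maximal_isClique_cover (hclaw : G.InducedFree clawGraph) (hcis : G.IsCIS) (s : V) :
    ∃ F₁ F₂, Maximal G.IsClique F₁ ∧ Maximal G.IsClique F₂ ∧ s ∈ F₁ ∧ s ∈ F₂ ∧
      G.closedNeighborSet s ⊆ F₁ ∪ F₂ := by
  obtain ⟨F₁, hsF₁, hF₁⟩ := Finite.exists_le_maximal (G.isClique_singleton s)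
  have hrest : G.IsClique (insert s (G.neighborSet s \ F₁)) :=
    isClique_insert.2 ⟨isClique_neighborSet_diff hclaw hcis hF₁ (hsF₁ rfl), fun v hv _ => hv.1⟩
  obtain ⟨F₂, hrestF₂, hF₂⟩ := Finite.exists_le_maximal hrest
  refine ⟨F₁, F₂, hF₁, hF₂, hsF₁ rfl, hrestF₂ (Set.mem_insert s _), ?_⟩
  rintro v (rfl | hsv)
  · exact Or.inl (hsF₁ rfl)
  · by_cases hvF₁ : v ∈ F₁
    exacts [Or.inl hvF₁, Or.inr (hrestF₂ (Or.inr ⟨hsv, hvF₁⟩))]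

lemma closedNeighborSet_subset_of_forall_adj_eq (hcis : G.IsCIS) {S : Set V}
    (hS : G.IsStableSet S) (hmax : ∀ T, G.IsStableSet T → T.ncard ≤ S.ncard) {s v : V}
    (hs : s ∈ S) (hv : v ∉ S) (hsv : G.Adj s v) (huniq : ∀ t ∈ S, G.Adj t v → t = s) :
    G.closedNeighborSet s ⊆ G.closedNeighborSet v := by
  rintro u (rfl | hsu)
  · exact Or.inr hsv.symm
  by_contra hvu
  simp only [mem_closedNeighborSet, not_or] at hvu
  have hU : Maximal G.IsStableSet (insert v (S \ {s})) := by
    refine maximal_of_forall_ncard_le (isStableSet_insert.2 ⟨hS.mono Set.sdiff_subset, ?_⟩) ?_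
    · rintro t ⟨htS, hts⟩ - hvt
      exact hts (huniq t htS hvt.symm)
    · intro T hT
      rw [Set.ncard_insert_of_notMem (fun h => hv h.1), Set.ncard_sdiff_singleton_add_one hs]
      exact hmax T hT
  obtain ⟨F, hsuF, hF⟩ := Finite.exists_le_maximal (G.isClique_pair.2 fun _ => hsu)
  obtain ⟨x, hxF, rfl | ⟨hxS, hxs⟩⟩ := hcis F _ hF hU
  · exact hvu.2 (hF.1 hxF (hsuF (by simp)) (Ne.symm hvu.1))
  · exact hS hs hxS (Ne.symm hxs) (hF.1 (hsuF (by simp)) hxF (Ne.symm hxs))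

end Finite

open Classical in
noncomputable def dischargeWeight (G : SimpleGraph V) (s v : V) : ℕ :=
  if G.closedNeighborSet s ⊆ G.closedNeighborSet v then 2
  else if v ∈ G.closedNeighborSet s then 1 else 0

lemma dischargeWeight_of_subset {s v : V} (h : G.closedNeighborSet s ⊆ G.closedNeighborSet v) :
    G.dischargeWeight s v = 2 :=
  if_pos h

lemma one_le_dischargeWeight {s v : V} (h : G.Adj s v) : 1 ≤ G.dischargeWeight s v := by
  unfold dischargeWeight
  split_ifs <;> simp_all

lemma dischargeWeight_le_indicator {F₁ F₂ : Set V} (hF₁ : Maximal G.IsClique F₁)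
    (hF₂ : Maximal G.IsClique F₂) {s : V} (hs₁ : s ∈ F₁) (hs₂ : s ∈ F₂)
    (hcover : G.closedNeighborSet s ⊆ F₁ ∪ F₂) (v : V) :
    G.dischargeWeight s v ≤ F₁.indicator 1 v + F₂.indicator 1 v := by
  unfold dischargeWeight
  split_ifs with hsub hmem
  · simp [mem_of_closedNeighborSet_subset hF₁ hs₁ hsub,
      mem_of_closedNeighborSet_subset hF₂ hs₂ hsub]
  · rcases hcover hmem with h | h <;> simp [h]
  · exact Nat.zero_le _

section Fintype

open Finset

variable [Fintype V]

lemma sum_dischargeWeight_le (hclaw : G.InducedFree clawGraph) (hcis : G.IsCIS) (s : V) :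
    ∑ v, G.dischargeWeight s v ≤ 2 * G.cliqueNumber := by
  obtain ⟨F₁, F₂, hF₁, hF₂, hs₁, hs₂, hcover⟩ := exists_maximal_isClique_cover hclaw hcis s
  calc ∑ v, G.dischargeWeight s v ≤ ∑ v, (F₁.indicator 1 v + F₂.indicator 1 v) :=
        sum_le_sum fun v _ => dischargeWeight_le_indicator hF₁ hF₂ hs₁ hs₂ hcover v
    _ = F₁.ncard + F₂.ncard := by
        classical
        simp [sum_add_distrib, Set.indicator_apply, Set.ncard_eq_toFinset_card']
    _ ≤ 2 * G.cliqueNumber := by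
        linarith [ncard_le_cliqueNumber hF₁.1, ncard_le_cliqueNumber hF₂.1]

lemma two_le_sum_dischargeWeight (hcis : G.IsCIS) {S : Finset V} (hS : G.IsStableSet S)
    (hmax : ∀ T, G.IsStableSet T → T.ncard ≤ #S) (v : V) :
    2 ≤ ∑ s ∈ S, G.dischargeWeight s v := by
  have single_le {s : V} (hs : s ∈ S) : G.dischargeWeight s v ≤ ∑ s ∈ S, G.dischargeWeight s v :=
    single_le_sum (f := (G.dischargeWeight · v)) (fun _ _ => Nat.zero_le _) hs
  by_cases hvS : v ∈ S
  · exact (dischargeWeight_of_subset subset_rfl).ge.trans (single_le hvS)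
  obtain ⟨s, hs, hsv⟩ : ∃ s ∈ S, G.Adj s v := by
    by_contra! h
    have := hmax _ (isStableSet_insert.2 ⟨hS, fun u hu _ hvu => h u hu hvu.symm⟩)
    rw [Set.ncard_insert_of_notMem hvS, Set.ncard_coe_finset] at this
    omega
  by_cases huniq : ∀ t ∈ S, G.Adj t v → t = s
  · have hsub := closedNeighborSet_subset_of_forall_adj_eq hcis hS (by simpa using hmax)
      hs hvS hsv huniq
    exact (dischargeWeight_of_subset hsub).ge.trans (single_le hs)
  classical
  push Not at huniq
  obtain ⟨t, ht, htv, hts⟩ := huniq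
  calc 2 ≤ G.dischargeWeight s v + G.dischargeWeight t v :=
        add_le_add (one_le_dischargeWeight hsv) (one_le_dischargeWeight htv)
    _ = ∑ x ∈ {s, t}, G.dischargeWeight x v := by rw [sum_pair hts.symm]
    _ ≤ ∑ x ∈ S, G.dischargeWeight x v :=
        sum_le_sum_of_subset (insert_subset hs (singleton_subset_iff.2 ht))

end Fintype

end SimpleGraph

/-- If `G` is a finite claw-free CIS graph, then `|V(G)| ≤ α(G) · ω(G)`. -/
theorem stmt_14 {V : Type*} [Fintype V] (G : SimpleGraph V)
    (hclaw : G.InducedFree clawGraph) (hcis : G.IsCIS) :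
    Fintype.card V ≤ G.stabilityNumber * G.cliqueNumber := by
  obtain ⟨S, hS, hSα⟩ := G.exists_isStableSet_ncard_eq_stabilityNumber
  lift S to Finset V using S.toFinite
  rw [Set.ncard_coe_finset] at hSα
  have hmax : ∀ T, G.IsStableSet T → T.ncard ≤ S.card := fun T hT =>
    hSα ▸ G.ncard_le_stabilityNumber hT
  have : 2 * Fintype.card V ≤ 2 * (G.stabilityNumber * G.cliqueNumber) := calc
    2 * Fintype.card V = ∑ _v : V, 2 := by simp [mul_comm]
    _ ≤ ∑ v, ∑ s ∈ S, G.dischargeWeight s v :=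
        Finset.sum_le_sum fun v _ => G.two_le_sum_dischargeWeight hcis hS hmax v
    _ = ∑ s ∈ S, ∑ v, G.dischargeWeight s v := Finset.sum_comm
    _ ≤ ∑ _s ∈ S, 2 * G.cliqueNumber :=
        Finset.sum_le_sum fun s _ => G.sum_dischargeWeight_le hclaw hcis s
    _ = 2 * (G.stabilityNumber * G.cliqueNumber) := by
        rw [Finset.sum_const, hSα, smul_eq_mul]; ring
  omega
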